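/- arXiv:1902.04273 — 6 statements merged into one kernel-verified Lean document; each statement's English description precedes it below -/
import Mathlib

section
/- Let 𝔑 be a nest in a vector space 𝔛, x ∈ 𝔛, and φ a linear functional on 𝔛. The rank-one operator x ⊗ φ (defined by (x ⊗ φ)(y) = φ(y)x) leaves every subspace in 𝔑 invariant if and only if 𝔑(x)₋ ⊆ ker φ. -/
variable {F X : Type*} [Field F] [AddCommGroup X] [Module F X]

/-- A nest: a totally ordered family of subspaces containing `⊥` and `⊤`,
closed under arbitrary intersections and spans (joins) of subfamilies. -/
def IsNest (N : Set (Submodule F X)) : Prop :=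
  IsChain (· ≤ ·) N ∧ ⊥ ∈ N ∧ ⊤ ∈ N ∧ ∀ S ⊆ N, sInf S ∈ N ∧ sSup S ∈ N

/-- `𝔑(x)`: the intersection of all members of `𝔑` containing `x`. -/
def nestAt (N : Set (Submodule F X)) (x : X) : Submodule F X :=
  sInf {M | M ∈ N ∧ x ∈ M}

/-- `𝔑(x)₋`: the union (as a set of vectors) of all members of `𝔑` not containing `x`. -/
def nestBelow (N : Set (Submodule F X)) (x : X) : Set X :=
  ⋃ M ∈ {M | M ∈ N ∧ x ∉ M}, (M : Set X)

/-- `Alg 𝔑`: the set of endomorphisms leaving every member of `𝔑` invariant. -/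
def nestAlg (N : Set (Submodule F X)) : Set (Module.End F X) :=
  {T | ∀ M ∈ N, ∀ x ∈ M, T x ∈ M}

theorem Submodule.forall_apply_smul_mem_iff {K V : Type*} [DivisionRing K] [AddCommGroup V]
    [Module K V] {M : Submodule K V} {x : V} {f : V →ₗ[K] K} :
    (∀ y ∈ M, f y • x ∈ M) ↔ x ∈ M ∨ M ≤ LinearMap.ker f := by
  constructor
  · intro h
    by_contra! ⟨hx, hM⟩
    obtain ⟨y, hyM, hy⟩ := SetLike.not_le_iff_exists.1 hM
    exact hx ((M.smul_mem_iff hy).1 (h y hyM))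
  · rintro (hx | hM) y hy
    · exact M.smul_mem _ hx
    · rw [LinearMap.mem_ker.1 (hM hy), zero_smul]
      exact M.zero_mem

theorem nestBelow_subset_iff {N : Set (Submodule F X)} {x : X} {S : Set X} :
    nestBelow N x ⊆ S ↔ ∀ M ∈ N, x ∉ M → (M : Set X) ⊆ S := by
  simp only [nestBelow, Set.mem_ofPred_eq, Set.iUnion₂_subset_iff, and_imp]

theorem rankOne_mem_nestAlg_iff_general {N : Set (Submodule F X)}
    (x : X) (φ : Module.Dual F X) :
    φ.smulRight x ∈ nestAlg N ↔ nestBelow N x ⊆ ↑(LinearMap.ker φ) := by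
  simp only [nestAlg, Set.mem_ofPred_eq, LinearMap.smulRight_apply,
    Submodule.forall_apply_smul_mem_iff, nestBelow_subset_iff, SetLike.coe_subset_coe,
    or_iff_not_imp_left]

/-- `x ⊗ φ ∈ Alg 𝔑 ↔ 𝔑(x)₋ ⊆ ker φ`. -/
theorem rankOne_mem_nestAlg_iff {N : Set (Submodule F X)} (hN : IsNest N)
    (x : X) (φ : Module.Dual F X) :
    φ.smulRight x ∈ nestAlg N ↔ nestBelow N x ⊆ ↑(LinearMap.ker φ) :=
  rankOne_mem_nestAlg_iff_general x φ
end

section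
/- Let 𝔑 be a nest in a vector space 𝔛 and let x, y be nonzero vectors with y ∈ 𝔑(x). Then there exists a rank-one operator R in Alg 𝔑 with Rx = y. -/
/-!
Let `W` be the join of the members of `𝔑` not containing `x`. Since `𝔑` is a chain, `W` is their
union, so `x ∉ W` and some functional `φ` has `φ x = 1` and `φ W = 0`. Every member of `𝔑` either
contains `x`, hence `𝔑(x)` and `y`, or is contained in `W ≤ ker φ`; in both cases it is invariant
under `y ⊗ φ`, which sends `x` to `y`.
-/

variable {F X : Type*} [Field F] [AddCommGroup X] [Module F X]

theorem Submodule.notMem_sSup_of_isChain {R M : Type*} [Semiring R] [AddCommMonoid M] [Module R M]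
    {C : Set (Submodule R M)} (hC : IsChain (· ≤ ·) C) {x : M} (hx : x ≠ 0)
    (hxC : ∀ P ∈ C, x ∉ P) : x ∉ sSup C := by
  rcases C.eq_empty_or_nonempty with rfl | hne
  · simpa using hx
  · rw [Submodule.mem_sSup_of_directed hne hC.directedOn]
    rintro ⟨P, hP, hxP⟩
    exact hxC P hP hxP

theorem Submodule.exists_dual_eq_one_of_notMem {W : Submodule F X} {x : X} (hx : x ∉ W) :
    ∃ φ : Module.Dual F X, φ x = 1 ∧ W ≤ LinearMap.ker φ := by
  obtain ⟨φ, hφW, hφx⟩ := LinearMap.exists_extend_of_notMem (0 : W →ₗ[F] F) hx 1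
  exact ⟨φ, hφx, fun v hv => congr($hφW ⟨v, hv⟩)⟩

theorem smulRight_mem_nestAlg {N : Set (Submodule F X)} {φ : Module.Dual F X} {z : X}
    (h : ∀ M ∈ N, z ∈ M ∨ M ≤ LinearMap.ker φ) : φ.smulRight z ∈ nestAlg N := by
  intro M hM v hv
  rcases h M hM with hz | hker
  · exact M.smul_mem (φ v) hz
  · simp [LinearMap.mem_ker.mp (hker hv)]

/-- if `y ∈ 𝔑(x)`, `x, y ≠ 0`, some rank-one `R ∈ Alg 𝔑` has `Rx = y`. -/
theorem exists_rankOne_mapsTo {N : Set (Submodule F X)} (hN : IsNest N)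
    {x y : X} (hx : x ≠ 0) (hy : y ≠ 0) (hyx : y ∈ nestAt N x) :
    ∃ R : Module.End F X, R ∈ nestAlg N ∧
      (∃ (z : X) (φ : Module.Dual F X), R = φ.smulRight z) ∧ R ≠ 0 ∧ R x = y := by
  have hxW : x ∉ sSup {M | M ∈ N ∧ x ∉ M} :=
    Submodule.notMem_sSup_of_isChain (hN.1.mono fun _ hM => hM.1) hx fun _ hM => hM.2
  obtain ⟨φ, hφx, hφW⟩ := Submodule.exists_dual_eq_one_of_notMem hxW
  have hRx : φ.smulRight y x = y := by simp [hφx]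
  refine ⟨φ.smulRight y, smulRight_mem_nestAlg fun M hM => ?_, ⟨y, φ, rfl⟩,
    fun h => hy (by rw [← hRx, h, LinearMap.zero_apply]), hRx⟩
  by_cases hxM : x ∈ M
  · exact .inl (sInf_le (show M ∈ {M | M ∈ N ∧ x ∈ M} from ⟨hM, hxM⟩) hyx)
  · exact .inr ((le_sSup (show M ∈ {M | M ∈ N ∧ x ∉ M} from ⟨hM, hxM⟩)).trans hφW)
end

section
/- Let 𝔑 be a nest in a vector space 𝔛 and let T ∈ Alg 𝔑 have finite rank n. Then T is a sum of n operators in Alg 𝔑, each of rank at most one. -/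
/-!
Induction on the rank. For `T ≠ 0` in `Alg 𝔑`, the nonzero images `T(M)`, `M ∈ 𝔑`, form a chain
of subspaces of the finite-dimensional range of `T`; one of least dimension is contained in all
the others, so it supplies a vector `e ≠ 0` lying in every `M ∈ 𝔑` with `T(M) ≠ 0`. Choose a
functional `φ` with `φ e = 1`. The rank-one operator `R x = φ (T x) • e` lies in `Alg 𝔑`, since it
vanishes on those `M` with `T(M) = 0` and maps into `F e ⊆ M` otherwise, and `T - R` has rank
one less than `T`, its range being a complement of `F e` in the range of `T`.
-/

variable {F X : Type*} [Field F] [AddCommGroup X] [Module F X]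

open Module Submodule LinearMap

theorem Submodule.exists_ne_zero_forall_mem_of_isChain {K V : Type*} [DivisionRing K]
    [AddCommGroup V] [Module K V] {S : Set (Submodule K V)} (hS : IsChain (· ≤ ·) S)
    (hne : S.Nonempty) (hbot : ⊥ ∉ S) (hfin : ∀ M ∈ S, FiniteDimensional K M) :
    ∃ e ≠ (0 : V), ∀ M ∈ S, e ∈ M := by
  set M₀ := Function.argminOn (fun M : Submodule K V ↦ finrank K M) S hne
  have hM₀ : M₀ ∈ S := Function.argminOn_mem _ _ hne
  have hM₀_min : ∀ M ∈ S, finrank K M₀ ≤ finrank K M :=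
    fun M hM ↦ Function.argminOn_le (fun M : Submodule K V ↦ finrank K M) S hM
  have hM₀_le : ∀ M ∈ S, M₀ ≤ M := by
    intro M hM
    rcases hS.total hM₀ hM with h | h
    · exact h
    · have := hfin M₀ hM₀
      exact (eq_of_le_of_finrank_le h (hM₀_min M hM)).ge
  obtain ⟨e, heM₀, he⟩ := exists_mem_ne_zero_of_ne_bot fun h ↦ hbot (h ▸ hM₀)
  exact ⟨e, he, fun M hM ↦ hM₀_le M hM heM₀⟩

theorem sub_mem_nestAlg {N : Set (Submodule F X)} {T R : Module.End F X}
    (hT : T ∈ nestAlg N) (hR : R ∈ nestAlg N) : T - R ∈ nestAlg N :=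
  fun M hM x hx ↦ M.sub_mem (hT M hM x hx) (hR M hM x hx)

theorem exists_ne_zero_mem_range_forall_mem_of_map_ne_bot {N : Set (Submodule F X)}
    (hN : IsChain (· ≤ ·) N) (htop : ⊤ ∈ N) {T : Module.End F X} (hT : T ∈ nestAlg N)
    [FiniteDimensional F (range T)] (hT0 : T ≠ 0) :
    ∃ e ∈ range T, e ≠ 0 ∧ ∀ M ∈ N, M.map T ≠ ⊥ → e ∈ M := by
  set S := (map T '' N) \ {⊥}
  have hS : IsChain (· ≤ ·) S :=
    (Monotone.isChain_image (fun _ _ ↦ map_mono) hN).mono Set.sdiff_subset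
  have hrange : map T ⊤ ∈ S := ⟨⟨⊤, htop, rfl⟩, by simpa [range_eq_bot] using hT0⟩
  obtain ⟨e, he, heS⟩ := exists_ne_zero_forall_mem_of_isChain hS ⟨_, hrange⟩
    (fun h ↦ h.2 rfl) (by rintro _ ⟨⟨M, -, rfl⟩, -⟩; exact finiteDimensional_of_le map_le_range)
  refine ⟨e, by simpa using heS _ hrange, he, fun M hM hTM ↦ ?_⟩
  obtain ⟨x, hx, rfl⟩ := heS _ ⟨⟨M, hM, rfl⟩, hTM⟩
  exact hT M hM x hx

section SmulRightComp

variable {T : Module.End F X} {φ : Dual F X} {e : X}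

theorem smulRight_comp_mem_nestAlg {N : Set (Submodule F X)}
    (he : ∀ M ∈ N, M.map T ≠ ⊥ → e ∈ M) : φ.smulRight e ∘ₗ T ∈ nestAlg N := by
  intro M hM x hx
  by_cases hTM : M.map T = ⊥
  · have hTx : T x = 0 := by simpa [hTM] using mem_map_of_mem (f := T) hx
    simp [hTx]
  · exact M.smul_mem _ (he M hM hTM)

theorem rank_range_smulRight_comp_le_one : Module.rank F (range (φ.smulRight e ∘ₗ T)) ≤ 1 :=
  (rank_submodule_le_one_iff' _).mpr
    ⟨e, by rintro _ ⟨x, rfl⟩; exact mem_span_singleton.mpr ⟨φ (T x), rfl⟩⟩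

theorem range_sub_smulRight_comp_le (he : e ∈ range T) :
    range (T - φ.smulRight e ∘ₗ T) ≤ range T := by
  rintro _ ⟨x, rfl⟩
  exact sub_mem ⟨x, rfl⟩ (smul_mem _ _ he)

theorem finrank_range_sub_smulRight_comp_add_one [FiniteDimensional F (range T)]
    (he : e ∈ range T) (hφ : φ e = 1) :
    finrank F (range (T - φ.smulRight e ∘ₗ T)) + 1 = finrank F (range T) := by
  set R := φ.smulRight e ∘ₗ T
  have := finiteDimensional_of_le (range_sub_smulRight_comp_le (φ := φ) he)
  -- `φ` vanishes on the range of `T - R` but not on `e`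
  have hdisj : Disjoint (range (T - R)) (F ∙ e) := by
    rw [disjoint_def]
    rintro _ ⟨x, rfl⟩ hx
    obtain ⟨c, hc⟩ := mem_span_singleton.mp hx
    have hc0 : c = 0 := by simpa [R, hφ] using congrArg φ hc
    simp [← hc, hc0]
  have hsup : range (T - R) ⊔ (F ∙ e) = range T := by
    refine le_antisymm
      (sup_le (range_sub_smulRight_comp_le he) ((span_singleton_le_iff_mem _ _).mpr he)) ?_
    rintro _ ⟨x, rfl⟩
    have hTx : T x = (T - R) x + φ (T x) • e := by simp [R]
    rw [hTx]
    exact add_mem (mem_sup_left ⟨x, rfl⟩)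
      (mem_sup_right (smul_mem _ _ (mem_span_singleton_self e)))
  have hdim := finrank_sup_add_finrank_inf_eq (range (T - R)) (F ∙ e)
  rwa [hsup, hdisj.eq_bot, finrank_bot, add_zero,
    finrank_span_singleton (by rintro rfl; simp at hφ), eq_comm] at hdim

end SmulRightComp

theorem exists_rank_le_one_mem_nestAlg_finrank_range_sub {N : Set (Submodule F X)}
    (hN : IsChain (· ≤ ·) N) (htop : ⊤ ∈ N) {T : Module.End F X} (hT : T ∈ nestAlg N)
    [FiniteDimensional F (range T)] (hT0 : T ≠ 0) :
    ∃ R ∈ nestAlg N, Module.rank F (range R) ≤ 1 ∧ range (T - R) ≤ range T ∧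
      finrank F (range (T - R)) + 1 = finrank F (range T) := by
  obtain ⟨e, heT, he0, heN⟩ := exists_ne_zero_mem_range_forall_mem_of_map_ne_bot hN htop hT hT0
  obtain ⟨φ, hφ⟩ := Projective.exists_dual_eq_one F he0
  exact ⟨_, smulRight_comp_mem_nestAlg heN, rank_range_smulRight_comp_le_one,
    range_sub_smulRight_comp_le heT, finrank_range_sub_smulRight_comp_add_one heT hφ⟩

/-- a rank-`n` operator in `Alg 𝔑` is a sum of `n` operators of
rank at most one in `Alg 𝔑`. -/
theorem finite_rank_decomposition {N : Set (Submodule F X)} (hN : IsNest N)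
    {T : Module.End F X} (hT : T ∈ nestAlg N)
    [FiniteDimensional F (LinearMap.range T)] {n : ℕ}
    (hn : Module.finrank F (LinearMap.range T) = n) :
    ∃ Ts : Fin n → Module.End F X,
      (∀ i, Ts i ∈ nestAlg N ∧ Module.rank F (LinearMap.range (Ts i)) ≤ 1) ∧
      T = ∑ i, Ts i := by
  induction n generalizing T with
  | zero =>
    refine ⟨0, fun i ↦ i.elim0, ?_⟩
    simpa [range_eq_bot] using hn
  | succ n ih =>
    have hT0 : T ≠ 0 := by rintro rfl; rw [range_zero, finrank_bot] at hn; omega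
    obtain ⟨R, hR, hRrank, hle, hrank⟩ :=
      exists_rank_le_one_mem_nestAlg_finrank_range_sub hN.1 hN.2.2.1 hT hT0
    have := finiteDimensional_of_le hle
    obtain ⟨Ts, hTs, hsum⟩ := ih (sub_mem_nestAlg hT hR) (by omega)
    refine ⟨Fin.cons R Ts, Fin.cases ⟨hR, hRrank⟩ hTs, ?_⟩
    rw [Fin.sum_cons, ← hsum, add_sub_cancel]
end

section
/- Let 𝔑 be a nest in a vector space 𝔛. The linear span of the rank-one operators in Alg 𝔑 is strictly dense in Alg 𝔑: for every T ∈ Alg 𝔑 and every finite subset F ⊆ 𝔛, there exists S in the span of the rank-one operators of Alg 𝔑 with Sx = Tx for all x ∈ F. -/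
variable {F X : Type*} [Field F] [AddCommGroup X] [Module F X]

/-!
For a nonzero `b`, the members of the nest not containing `b` form a chain, so their union is a
subspace missing `b` and some functional `f` has `f b = 1` and kills all of them; hence
`f ⊗ y ∈ Alg 𝔑` as soon as `y` lies in every member containing `b`. Interpolating `T` on a
finite-dimensional `W ∋ b` now goes by induction on `dim W`: if `S'` interpolates `T` on
`W ∩ ker f`, then `S' + f ⊗ (T b - S' b)` interpolates it on `W`.
-/

open Submodule

variable {N : Set (Submodule F X)}

def nestAlgRankOne (N : Set (Submodule F X)) : Set (Module.End F X) :=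
  {R | R ∈ nestAlg N ∧ Module.rank F (LinearMap.range R) = 1}

lemma IsChain.exists_dual_eq_one_of_notMem (hN : IsChain (· ≤ ·) N) {x : X} (hx : x ≠ 0) :
    ∃ f : Module.Dual F X, f x = 1 ∧ ∀ M ∈ N, x ∉ M → ∀ m ∈ M, f m = 0 := by
  set K := sSup {M | M ∈ N ∧ x ∉ M}
  have hxK : x ∉ K := by
    rcases Set.eq_empty_or_nonempty {M | M ∈ N ∧ x ∉ M} with hempty | hne
    · simpa [K, hempty] using hx
    · rw [mem_sSup_of_directed hne ((hN.mono fun _ hM => hM.1).directedOn)]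
      rintro ⟨M, ⟨-, hxM⟩, hxM'⟩
      exact hxM hxM'
  obtain ⟨g, hgx, hgK⟩ := exists_dual_map_eq_bot_of_notMem hxK inferInstance
  refine ⟨(g x)⁻¹ • g, inv_mul_cancel₀ hgx, fun M hM hxM m hm => ?_⟩
  have hgm : g m ∈ K.map g := mem_map_of_mem ((le_sSup ⟨hM, hxM⟩ : M ≤ K) hm)
  rw [hgK, mem_bot] at hgm
  simp [hgm]

lemma smulRight_mem_nestAlg_s8 {f : Module.Dual F X} {x y : X}
    (hf : ∀ M ∈ N, x ∉ M → ∀ m ∈ M, f m = 0) (hy : ∀ M ∈ N, x ∈ M → y ∈ M) :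
    f.smulRight y ∈ nestAlg N := by
  intro M hM m hm
  by_cases hxM : x ∈ M
  · exact M.smul_mem _ (hy M hM hxM)
  · simp [hf M hM hxM m hm]

lemma smulRight_mem_span_nestAlgRankOne {f : Module.Dual F X} {y : X}
    (hR : f.smulRight y ∈ nestAlg N) : f.smulRight y ∈ span F (nestAlgRankOne N) := by
  rcases eq_or_ne f 0 with rfl | hf
  · simp
  rcases eq_or_ne y 0 with rfl | hy
  · simp
  refine subset_span ⟨hR, ?_⟩
  rw [LinearMap.range_smulRight_apply hf, ← Module.finrank_eq_rank, finrank_span_singleton hy,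
    Nat.cast_one]

lemma mem_nestAlg_of_mem_span_nestAlgRankOne {S : Module.End F X}
    (hS : S ∈ span F (nestAlgRankOne N)) : S ∈ nestAlg N := by
  induction hS using span_induction with
  | mem R hR => exact hR.1
  | zero => exact fun M _ _ _ => M.zero_mem
  | add R R' _ _ hR hR' => exact fun M hM m hm => M.add_mem (hR M hM m hm) (hR' M hM m hm)
  | smul c R _ hR => exact fun M hM m hm => M.smul_mem c (hR M hM m hm)

lemma IsChain.exists_mem_span_nestAlgRankOne_eqOn (hN : IsChain (· ≤ ·) N)
    {T : Module.End F X} (hT : T ∈ nestAlg N) (W : Submodule F X) [FiniteDimensional F W] :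
    ∃ S ∈ span F (nestAlgRankOne N), ∀ w ∈ W, S w = T w := by
  induction h : Module.finrank F W using Nat.strong_induction_on generalizing W with
  | _ n ih =>
  rcases eq_or_ne W ⊥ with rfl | hW
  · exact ⟨0, zero_mem _, fun w hw => by simp [(mem_bot F).1 hw]⟩
  obtain ⟨b, hbW, hb0⟩ := exists_mem_ne_zero_of_ne_bot hW
  obtain ⟨f, hfb, hf⟩ := hN.exists_dual_eq_one_of_notMem hb0
  set W' := W ⊓ LinearMap.ker f
  have hW'W : W' < W := lt_of_le_of_ne inf_le_left fun hW' => by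
    simpa [hfb] using (hW' ▸ hbW : b ∈ W').2
  obtain ⟨S', hS', hS'W'⟩ := ih _ (h ▸ finrank_lt_finrank_of_lt hW'W) W' rfl
  have hR : f.smulRight (T b - S' b) ∈ nestAlg N := smulRight_mem_nestAlg_s8 hf fun M hM hbM =>
    M.sub_mem (hT M hM b hbM) (mem_nestAlg_of_mem_span_nestAlgRankOne hS' M hM b hbM)
  refine ⟨S' + f.smulRight (T b - S' b), add_mem hS' (smulRight_mem_span_nestAlgRankOne hR),
    fun w hw => ?_⟩
  have hw' : w - f w • b ∈ W' := ⟨W.sub_mem hw (W.smul_mem _ hbW), by simp [hfb]⟩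
  have hS'w := hS'W' _ hw'
  simp only [map_sub, map_smul] at hS'w
  simp only [LinearMap.add_apply, LinearMap.smulRight_apply]
  linear_combination (norm := module) hS'w

/-- the span of the rank-one operators in `Alg 𝔑` is strictly dense. -/
theorem span_rankOne_strictly_dense {N : Set (Submodule F X)} (hN : IsNest N)
    {T : Module.End F X} (hT : T ∈ nestAlg N) (Fs : Finset X) :
    ∃ S ∈ Submodule.span F
      {R : Module.End F X | R ∈ nestAlg N ∧ Module.rank F (LinearMap.range R) = 1},
      ∀ x ∈ Fs, S x = T x := by
  obtain ⟨S, hS, hST⟩ := hN.1.exists_mem_span_nestAlgRankOne_eqOn hT (span F (Fs : Set X))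
  exact ⟨S, hS, fun x hx => hST x (subset_span hx)⟩
end

section
/- Let 𝔑 be a nest in a vector space 𝔛 and let 𝔑^⊥ = {M^⊥ : M ∈ 𝔑} be the dual family of subspaces of the algebraic dual 𝔛′. Then 𝔑^⊥ is complete (closed under arbitrary intersections and under unions of chains, with these operations yielding members of 𝔑^⊥) if and only if 𝔑 is well-ordered by inclusion (equivalently, 𝔑 contains no strictly decreasing infinite sequence of subspaces). -/
variable {F X : Type*} [Field F] [AddCommGroup X] [Module F X]

/-!
If `𝔑` is well-ordered, every `T ⊆ 𝔑` has a least member `m`; as `M ↦ M^⊥` reverses inclusion,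
`⋁ T^⊥ = m^⊥` and `⋀ T^⊥ = (⋁ T)^⊥`, which lies in `𝔑^⊥` because `𝔑` is closed under joins.
Conversely, let `f 0 ⊋ f 1 ⊋ ⋯` lie in `𝔑` and put `M = ⋂ f n`. Vectors `x n ∈ f n \ f (n + 1)` are
linearly independent modulo `M`, so some functional `φ` kills `M` and is `1` on every `x n`. Then
`φ ∈ M^⊥` lies in none of the `(f n)^⊥`, so the increasing union `⋁ (f n)^⊥` is no annihilator:
if it were `M'^⊥`, then `M' ⊆ M` and `φ` would belong to it.
-/

theorem Set.IsWF.exists_isLeast_of_isChain {α : Type*} [PartialOrder α] {s : Set α}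
    (hwf : s.IsWF) (hc : IsChain (· ≤ ·) s) (hne : s.Nonempty) : ∃ m, IsLeast s m := by
  refine ⟨hwf.min hne, hwf.min_mem hne, fun a ha => ?_⟩
  rcases eq_or_ne (hwf.min hne) a with h | h
  · exact h.le
  · exact (hc (hwf.min_mem hne) ha h).resolve_right
      fun hle => hwf.not_lt_min hne ha (lt_of_le_of_ne hle h.symm)

namespace Submodule

section CommSemiring

variable {R M : Type*} [CommSemiring R] [AddCommMonoid M] [Module R M]

theorem dualAnnihilator_sSup_eq (T : Set (Submodule R M)) :
    (sSup T).dualAnnihilator = sInf (dualAnnihilator '' T) := by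
  rw [sInf_image]
  exact (dualAnnihilator_gc R M).l_sSup

theorem sSup_image_dualAnnihilator_of_isLeast {T : Set (Submodule R M)} {m : Submodule R M}
    (hm : IsLeast T m) : sSup (dualAnnihilator '' T) = m.dualAnnihilator :=
  (Antitone.map_isLeast (fun _ _ => dualAnnihilator_anti) hm).isLUB.sSup_eq

end CommSemiring

section DivisionRing

variable {K V : Type*} [DivisionRing K] [AddCommGroup V] [Module K V]

theorem linearIndependent_mkQ_iInf {f : ℕ → Submodule K V} (hf : Antitone f) {x : ℕ → V}
    (hx : ∀ n, x n ∈ f n) (hx' : ∀ n, x n ∉ f (n + 1)) :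
    LinearIndependent K ((⨅ n, f n).mkQ ∘ x) := by
  rw [linearIndependent_iff]
  intro l hl
  by_contra hl0
  -- Look at the smallest index `n₀` of the relation: every other term lies in `f (n₀ + 1)`.
  set n₀ := l.support.min' (Finsupp.support_nonempty_iff.2 hl0)
  have hn₀ : n₀ ∈ l.support := l.support.min'_mem _
  have hsum : ∑ i ∈ l.support, l i • x i ∈ f (n₀ + 1) := by
    have hzero : (⨅ n, f n).mkQ (∑ i ∈ l.support, l i • x i) = 0 := by
      simpa [Finsupp.linearCombination_apply, Finsupp.sum] using hl
    exact iInf_le f _ ((Quotient.mk_eq_zero _).1 hzero)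
  have htail : ∑ i ∈ l.support.erase n₀, l i • x i ∈ f (n₀ + 1) :=
    sum_mem fun i hi => smul_mem _ _ <| hf (Nat.succ_le_of_lt <|
      lt_of_le_of_ne (l.support.min'_le i (Finset.mem_of_mem_erase hi))
        (Finset.ne_of_mem_erase hi).symm) (hx i)
  rw [← Finset.add_sum_erase _ _ hn₀] at hsum
  have hhead : l n₀ • x n₀ ∈ f (n₀ + 1) := (add_mem_cancel_right htail).1 hsum
  exact hx' n₀ ((smul_mem_iff _ (Finsupp.mem_support_iff.1 hn₀)).1 hhead)

end DivisionRing

section Field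

variable {K V : Type*} [Field K] [AddCommGroup V] [Module K V]

theorem exists_mem_dualAnnihilator_iInf_forall_notMem {f : ℕ → Submodule K V}
    (hf : StrictAnti f) :
    ∃ φ : Module.Dual K V, φ ∈ (⨅ n, f n).dualAnnihilator ∧ ∀ n, φ ∉ (f n).dualAnnihilator := by
  choose x hx hx' using fun n => SetLike.exists_of_lt (hf (Nat.lt_succ_self n))
  obtain ⟨ψ, hψ⟩ := Module.exists_dual_forall_apply_eq_one
    ((linearIndependent_mkQ_iInf hf.antitone hx hx').linearIndepOn Set.univ)
  refine ⟨ψ ∘ₗ (⨅ n, f n).mkQ, (mem_dualAnnihilator _).2 fun w hw => ?_, fun n hn => ?_⟩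
  · simp [(Quotient.mk_eq_zero _).2 hw]
  · exact one_ne_zero <|
      (hψ n (Set.mem_univ n)).symm.trans ((mem_dualAnnihilator _).1 hn _ (hx n))

theorem iSup_dualAnnihilator_ne_dualAnnihilator {f : ℕ → Submodule K V} (hf : StrictAnti f)
    (M : Submodule K V) : ⨆ n, (f n).dualAnnihilator ≠ M.dualAnnihilator := by
  intro h
  obtain ⟨φ, hφ, hφn⟩ := exists_mem_dualAnnihilator_iInf_forall_notMem hf
  have hM : M ≤ ⨅ n, f n := le_iInf fun n =>
    Subspace.dualAnnihilator_le_dualAnnihilator_iff.1 <|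
      h ▸ le_iSup (fun n => (f n).dualAnnihilator) n
  have hdir : Directed (· ≤ ·) fun n => (f n).dualAnnihilator :=
    Monotone.directed_le fun _ _ hmn => dualAnnihilator_anti (hf.antitone hmn)
  obtain ⟨n, hn⟩ := (mem_iSup_of_directed _ hdir).1 (h ▸ dualAnnihilator_anti hM hφ)
  exact hφn n hn

end Field

end Submodule

/-- the dual nest `𝔑^⊥` is complete iff `𝔑` is well-ordered by
inclusion (no strictly decreasing infinite sequence). -/
theorem dual_nest_complete_iff_wellOrdered {N : Set (Submodule F X)} (hN : IsNest N) :
    (∀ S ⊆ Submodule.dualAnnihilator '' N,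
        sInf S ∈ Submodule.dualAnnihilator '' N ∧
        sSup S ∈ Submodule.dualAnnihilator '' N) ↔
      ¬∃ f : ℕ → Submodule F X, (∀ n, f n ∈ N) ∧ StrictAnti f := by
  obtain ⟨hchain, -, htop, hclosed⟩ := hN
  have hwf_iff : N.IsWF ↔ ¬∃ f : ℕ → Submodule F X, (∀ n, f n ∈ N) ∧ StrictAnti f := by
    simp only [Set.isWF_iff_no_descending_seq, not_exists, not_and]
    exact forall_congr' fun f => imp_not_comm
  rw [← hwf_iff]
  constructor
  · intro hcomplete
    refine Set.isWF_iff_no_descending_seq.2 fun f hf hfN => ?_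
    obtain ⟨-, M, -, hM⟩ := hcomplete (Set.range fun n => (f n).dualAnnihilator)
      (Set.range_subset_iff.2 fun n => Set.mem_image_of_mem _ (hfN n))
    exact Submodule.iSup_dualAnnihilator_ne_dualAnnihilator hf M (sSup_range.symm.trans hM.symm)
  · intro hwf S hS
    obtain ⟨T, hTN, rfl⟩ := Set.subset_image_iff.1 hS
    refine ⟨⟨sSup T, (hclosed T hTN).2, Submodule.dualAnnihilator_sSup_eq T⟩, ?_⟩
    rcases T.eq_empty_or_nonempty with rfl | hT
    · exact ⟨⊤, htop, by simp⟩
    · obtain ⟨m, hm⟩ := (hwf.mono hTN).exists_isLeast_of_isChain (hchain.mono hTN) hT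
      exact ⟨m, hTN hm.1, (Submodule.sSup_image_dualAnnihilator_of_isLeast hm).symm⟩
end

section
/- Let M₁ ⊋ M₂ ⊋ ⋯ be a strictly decreasing sequence of subspaces of a vector space 𝔛 with intersection M_∞ = ⋂_n M_n. Then there exists a linear functional φ on 𝔛 with φ(x_n) = 1 for all n (where x_n ∈ M_n \ M_{n+1} are chosen arbitrarily) and M_∞ ⊆ ker φ; consequently ⋃_{n} M_n^⊥ is strictly contained in M_∞^⊥. -/
variable {F X : Type*} [Field F] [AddCommGroup X] [Module F X]

/-!
Modulo `M_∞ = ⋂ₙ Mₙ` the vectors `xₙ` are linearly independent: in a vanishing combination, the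
term of least index with nonzero coefficient would lie in the span of the later vectors, which
sits inside `Mₙ₊₁`. A functional on `𝔛 ⧸ M_∞` equal to `1` on all of them (extend to a basis)
pulls back to `φ`. Since `φ(xₙ) = 1` with `xₙ ∈ Mₙ`, `φ` annihilates no `Mₙ`, although it
annihilates `M_∞`.
-/

open Submodule

section DivisionRing

variable {K V : Type*} [DivisionRing K] [AddCommGroup V] [Module K V]

theorem linearIndependent_of_notMem_span_Ioi {ι : Type*} [LinearOrder ι] {v : ι → V}
    (hv : ∀ i, v i ∉ span K (v '' Set.Ioi i)) : LinearIndependent K v := by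
  refine linearIndependent_iff.mpr fun l hl => ?_
  by_contra hl0
  have hne : l.support.Nonempty := Finsupp.support_nonempty_iff.mpr hl0
  set m := l.support.min' hne
  have hm : m ∈ l.support := l.support.min'_mem hne
  have hlater : ∑ i ∈ l.support.erase m, l i • v i ∈ span K (v '' Set.Ioi m) := by
    refine sum_mem fun i hi => smul_mem _ _ (subset_span ⟨i, ?_, rfl⟩)
    exact lt_of_le_of_ne (l.support.min'_le i (Finset.mem_of_mem_erase hi))
      (Finset.ne_of_mem_erase hi).symm
  have hsplit : l m • v m + ∑ i ∈ l.support.erase m, l i • v i = 0 := by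
    rw [Finset.add_sum_erase _ (fun i => l i • v i) hm, ← hl, Finsupp.linearCombination_apply,
      Finsupp.sum]
  have hlead : l m • v m ∈ span K (v '' Set.Ioi m) := by
    rw [eq_neg_of_add_eq_zero_left hsplit]
    exact neg_mem hlater
  exact hv m ((smul_mem_iff _ (Finsupp.mem_support_iff.mp hm)).mp hlead)

theorem linearIndependent_mkQ_of_antitone {M : ℕ → Submodule K V} (hM : Antitone M)
    {p : Submodule K V} (hp : ∀ n, p ≤ M n) {x : ℕ → V}
    (hx : ∀ n, x n ∈ M n ∧ x n ∉ M (n + 1)) : LinearIndependent K (p.mkQ ∘ x) := by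
  refine linearIndependent_of_notMem_span_Ioi fun n hn => (hx n).2 ?_
  have hlater : span K (x '' Set.Ioi n) ≤ M (n + 1) :=
    span_le.mpr <| Set.image_subset_iff.mpr fun j hj => hM (Nat.succ_le_of_lt hj) (hx j).1
  rw [Set.image_comp, ← map_span] at hn
  have := mem_comap.mpr (map_mono hlater hn)
  rwa [comap_map_mkQ, sup_eq_right.mpr (hp (n + 1))] at this

end DivisionRing

theorem exists_dual_forall_apply_eq_one_of_linearIndependent_mkQ {ι : Type*} {p : Submodule F X}
    {x : ι → X} (hx : LinearIndependent F (p.mkQ ∘ x)) :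
    ∃ φ : Module.Dual F X, (∀ i, φ (x i) = 1) ∧ p ≤ LinearMap.ker φ := by
  obtain ⟨ψ, hψ⟩ := Module.exists_dual_forall_apply_eq_one (hx.linearIndepOn Set.univ)
  refine ⟨ψ ∘ₗ p.mkQ, fun i => hψ i (Set.mem_univ i), ?_⟩
  simpa only [ker_mkQ] using LinearMap.ker_le_ker_comp p.mkQ ψ

/-- there is a functional `φ` with `φ(xₙ) = 1` for all `n` and
`⋂ₙ Mₙ ⊆ ker φ`; consequently `⋃ₙ Mₙ^⊥ ⊊ (⋂ₙ Mₙ)^⊥`. -/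
theorem exists_functional_of_strictAnti {M : ℕ → Submodule F X}
    (hM : StrictAnti M) {x : ℕ → X} (hx : ∀ n, x n ∈ M n ∧ x n ∉ M (n + 1)) :
    (∃ φ : Module.Dual F X, (∀ n, φ (x n) = 1) ∧ (⨅ n, M n) ≤ LinearMap.ker φ) ∧
    (⋃ n, ((M n).dualAnnihilator : Set (Module.Dual F X))) ⊂
      ↑((⨅ n, M n).dualAnnihilator) := by
  obtain ⟨φ, hφx, hφK⟩ := exists_dual_forall_apply_eq_one_of_linearIndependent_mkQ
    (linearIndependent_mkQ_of_antitone hM.antitone (fun n => iInf_le M n) hx)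
  have hsub : (⋃ n, ((M n).dualAnnihilator : Set (Module.Dual F X))) ⊆
      ↑((⨅ n, M n).dualAnnihilator) :=
    Set.iUnion_subset fun n => dualAnnihilator_anti (iInf_le M n)
  refine ⟨⟨φ, hφx, hφK⟩, (Set.ssubset_iff_of_subset hsub).mpr ⟨φ, ?_, ?_⟩⟩
  · exact (mem_dualAnnihilator φ).mpr fun w hw => hφK hw
  · simp only [Set.mem_iUnion, SetLike.mem_coe, mem_dualAnnihilator, not_exists]
    exact fun n hn => one_ne_zero ((hφx n).symm.trans (hn _ (hx n).1))
end
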